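/- Let S be a numerical semigroup whose Hilbert function H_R (of R = k[[S]]) is decreasing at level h, i.e. H_R(h) < H_R(h−1). Then there exist two distinct elements x_1, x_2 ∈ D_h such that |Supp(x_r + e)| ≥ 2 for r = 1, 2. -/

import Mathlib

open Set

/-- A numerical semigroup: a cofinite submonoid of ℕ. -/
def IsNumSgp (S : Set ℕ) : Prop :=
  0 ∈ S ∧ (∀ a ∈ S, ∀ b ∈ S, a + b ∈ S) ∧ Sᶜ.Finite

/-- The maximal ideal `M = S \ {0}`. -/
def MS (S : Set ℕ) : Set ℕ := S \ {0}

/-- The multiplicity `e` of `S`, the smallest nonzero element. -/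
noncomputable def mult (S : Set ℕ) : ℕ := sInf (MS S)

/-- `nM S h` is the set of sums of `h` elements of `M = S \ {0}` (with `nM S 0 = {0}`). -/
def nM (S : Set ℕ) : ℕ → Set ℕ
  | 0 => {0}
  | k + 1 => {x | ∃ a ∈ MS S, ∃ b ∈ nM S k, x = a + b}

/-- The order of `s`: the largest `h` with `s ∈ hM`. -/
noncomputable def ordS (S : Set ℕ) (s : ℕ) : ℕ := sSup {h | s ∈ nM S h}

/-- The Apéry set of `S` with respect to the multiplicity `e`:
elements `s ∈ S` with `s - e ∉ S`. -/
def Ap (S : Set ℕ) : Set ℕ := {s ∈ S | ∀ t ∈ S, t + mult S ≠ s}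

/-- Elements of the Apéry set of order `k`. -/
def ApK (S : Set ℕ) (k : ℕ) : Set ℕ := {s ∈ Ap S | ordS S s = k}

/-- `C_k = {s ∈ S : ord s = k and s - e ∉ (k-1)M}`. -/
def CK (S : Set ℕ) (k : ℕ) : Set ℕ :=
  {s ∈ S | ordS S s = k ∧ ∀ t ∈ nM S (k - 1), t + mult S ≠ s}

/-- `D_k = {s ∈ S : ord s = k-1 and ord (s+e) > k}`. -/
def DK (S : Set ℕ) (k : ℕ) : Set ℕ :=
  {s ∈ S | ordS S s = k - 1 ∧ k < ordS S (s + mult S)}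

/-- The Hilbert function of `R = k[[S]]`: `H(0) = 1`, `H(n) = |nM \ (n+1)M|`. -/
noncomputable def HF (S : Set ℕ) (n : ℕ) : ℕ := (nM S n \ nM S (n + 1)).ncard

/-- The set of minimal generators of `S`. -/
def MinGens (S : Set ℕ) : Set ℕ :=
  MS S \ {x | ∃ a ∈ MS S, ∃ b ∈ MS S, x = a + b}

/-- `a` is a maximal representation of `s`: a finitely supported coefficient
function on the minimal generators with `Σ aⱼ nⱼ = s` and `Σ aⱼ = ord s`. -/
def IsMaxRep (S : Set ℕ) (s : ℕ) (a : ℕ →₀ ℕ) : Prop :=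
  (↑a.support : Set ℕ) ⊆ MinGens S ∧
  (a.sum fun n c => c * n) = s ∧
  (a.sum fun _ c => c) = ordS S s

/-- `|Supp(s)|`: the maximal number of distinct minimal generators appearing
in a maximal representation of `s`. -/
noncomputable def SuppCard (S : Set ℕ) (s : ℕ) : ℕ :=
  sSup {q | ∃ a : ℕ →₀ ℕ, IsMaxRep S s a ∧ a.support.card = q}

/-- The Frobenius number of `S`. -/
noncomputable def Frob (S : Set ℕ) : ℕ := sSup Sᶜ

/-!
For `h ≥ 2` (forced by `H(h) < H(h-1)`, as `H(0) = 1 ≤ H(1)`), the map `s ↦ s + e` embeds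
`((h-1)M \ hM) \ D_h` into `(hM \ (h+1)M) \ C_h`, so the drop of the Hilbert function gives
`|C_h| < |D_h|`. If `x ∈ D_h` has `|Supp(x + e)| ≤ 1`, then `x + e = A * n` for a minimal generator
`n` and `A = ord(x + e) > h`, and `x ↦ h * n` is an injection of these elements into `C_h`.
An element `b ∈ D_h` with `|Supp(b + e)| ≥ 2` gives, as a degree-`h` sub-sum of a maximal
representation of `b + e` involving two generators, an element of `C_h` outside the image of this
injection. So if at most one element of `D_h` had `|Supp(x + e)| ≥ 2`, we would get `|D_h| ≤ |C_h|`.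
-/

open Finsupp

section

variable {S : Set ℕ} {h j k n s x y : ℕ}

theorem IsNumSgp.add_mem (hS : IsNumSgp S) (hx : x ∈ S) (hy : y ∈ S) : x + y ∈ S :=
  hS.2.1 x hx y hy

theorem IsNumSgp.mult_mem (hS : IsNumSgp S) : mult S ∈ MS S := by
  have hinf : S.Infinite := by simpa using hS.2.2.infinite_compl
  exact Nat.sInf_mem (hinf.sdiff (finite_singleton 0)).nonempty

theorem mult_le (hx : x ∈ MS S) : mult S ≤ x := Nat.sInf_le hx

theorem mem_nM_zero : x ∈ nM S 0 ↔ x = 0 := Iff.rfl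

theorem mem_nM_one (hx : x ∈ MS S) : x ∈ nM S 1 := ⟨x, hx, 0, rfl, rfl⟩

theorem le_of_mem_nM (hx : x ∈ nM S k) : k ≤ x := by
  induction k generalizing x with
  | zero => exact Nat.zero_le x
  | succ k ih =>
    obtain ⟨a, ha, b, hb, rfl⟩ := hx
    have ha0 : a ≠ 0 := ha.2
    have := ih hb
    omega

theorem IsNumSgp.mem_of_mem_nM (hS : IsNumSgp S) (hx : x ∈ nM S k) : x ∈ S := by
  induction k generalizing x with
  | zero => exact (mem_nM_zero.1 hx) ▸ hS.1
  | succ k ih =>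
    obtain ⟨a, ha, b, hb, rfl⟩ := hx
    exact hS.add_mem ha.1 (ih hb)

theorem add_mem_nM (hx : x ∈ nM S j) (hy : y ∈ nM S k) : x + y ∈ nM S (j + k) := by
  induction j generalizing x with
  | zero => simpa [mem_nM_zero.1 hx] using hy
  | succ j ih =>
    obtain ⟨a, ha, b, hb, rfl⟩ := hx
    rw [Nat.add_right_comm]
    exact ⟨a, ha, b + y, ih hb, by omega⟩

theorem mul_mem_nM (hx : x ∈ MS S) (k : ℕ) : k * x ∈ nM S k := by
  induction k with
  | zero => simpa using mem_nM_zero.2 rfl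
  | succ k ih => exact ⟨x, hx, k * x, ih, by ring⟩

theorem IsNumSgp.nM_succ_subset (hS : IsNumSgp S) (hk : 1 ≤ k) : nM S (k + 1) ⊆ nM S k := by
  obtain ⟨k, rfl⟩ := Nat.exists_eq_add_of_le' hk
  rintro _ ⟨a, ha, _, ⟨a', ha', b, hb, rfl⟩, rfl⟩
  refine ⟨a + a', ⟨hS.add_mem ha.1 ha'.1, ?_⟩, b, hb, by ring⟩
  have ha0 : a ≠ 0 := ha.2
  simp only [mem_singleton_iff]
  omega

theorem IsNumSgp.nM_subset_of_le (hS : IsNumSgp S) (hj : 1 ≤ j) (hjk : j ≤ k) :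
    nM S k ⊆ nM S j := by
  induction k, hjk using Nat.le_induction with
  | base => exact subset_rfl
  | succ k hk ih => exact (hS.nM_succ_subset (hj.trans hk)).trans ih

theorem bddAbove_ordS_set : BddAbove {k | s ∈ nM S k} := ⟨s, fun _ => le_of_mem_nM⟩

theorem le_ordS (hs : s ∈ nM S k) : k ≤ ordS S s := le_csSup bddAbove_ordS_set hs

theorem mem_nM_ordS_of_mem_nM (hs : s ∈ nM S k) : s ∈ nM S (ordS S s) :=
  Nat.sSup_mem ⟨k, hs⟩ bddAbove_ordS_set

theorem mem_nM_ordS (hs : s ∈ S) : s ∈ nM S (ordS S s) := by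
  rcases eq_or_ne s 0 with rfl | hs0
  · exact mem_nM_ordS_of_mem_nM (mem_nM_zero.2 rfl)
  · exact mem_nM_ordS_of_mem_nM (mem_nM_one ⟨hs, hs0⟩)

theorem IsNumSgp.mem_nM_iff_le_ordS (hS : IsNumSgp S) (hs : s ∈ S) (hk : 1 ≤ k) :
    s ∈ nM S k ↔ k ≤ ordS S s :=
  ⟨le_ordS, fun hle => hS.nM_subset_of_le hk hle (mem_nM_ordS hs)⟩

theorem IsNumSgp.finite_nM_diff (hS : IsNumSgp S) (k : ℕ) : (nM S k \ nM S (k + 1)).Finite := by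
  refine (finite_Iic (Frob S + k * mult S)).subset fun s ⟨_, hs⟩ => ?_
  by_contra hgt
  simp only [mem_Iic, not_le] at hgt
  -- everything above the Frobenius number lies in `S`, so `s = (s - k e) + k e ∈ (k+1)M`
  have hm : s - k * mult S ∈ S := by
    by_contra hm
    have : s - k * mult S ≤ Frob S := le_csSup hS.2.2.bddAbove hm
    omega
  have hsum := add_mem_nM (mem_nM_one ⟨hm, by simp only [mem_singleton_iff]; omega⟩)
    (mul_mem_nM hS.mult_mem k)
  rw [Nat.sub_add_cancel (by omega), add_comm 1] at hsum
  exact hs hsum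

theorem HF_zero : HF S 0 = 1 := by
  have : nM S 0 \ nM S 1 = {0} := by
    ext s
    refine ⟨fun hs => hs.1, fun hs => ⟨hs, fun h1 => ?_⟩⟩
    have := le_of_mem_nM h1
    simp_all
  rw [HF, this, ncard_singleton]

theorem IsNumSgp.HF_one_pos (hS : IsNumSgp S) : 0 < HF S 1 := by
  refine (ncard_pos (hS.finite_nM_diff 1)).2 ⟨mult S, mem_nM_one hS.mult_mem, ?_⟩
  rintro ⟨a, ha, b, hb, hab⟩
  have hea := mult_le ha
  have hb1 : 1 ≤ b := le_of_mem_nM hb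
  omega

theorem IsNumSgp.two_le_of_HF_lt (hS : IsNumSgp S) (hdec : HF S h < HF S (h - 1)) : 2 ≤ h := by
  by_contra hlt
  interval_cases h
  · exact lt_irrefl _ hdec
  · have := hS.HF_one_pos
    rw [Nat.sub_self, HF_zero] at hdec
    omega

theorem DK_subset (hh : 1 ≤ h) : DK S h ⊆ nM S (h - 1) \ nM S h := by
  rintro x ⟨hxS, hord, -⟩
  refine ⟨hord ▸ mem_nM_ordS hxS, fun hx => ?_⟩
  have := le_ordS hx
  omega

theorem CK_subset : CK S h ⊆ nM S h \ nM S (h + 1) := by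
  rintro s ⟨hsS, hord, -⟩
  refine ⟨hord ▸ mem_nM_ordS hsS, fun hs => ?_⟩
  have := le_ordS hs
  omega

theorem IsNumSgp.ncard_CK_lt_ncard_DK (hS : IsNumSgp S) (hh : 1 ≤ h)
    (hdec : HF S h < HF S (h - 1)) : (CK S h).ncard < (DK S h).ncard := by
  have e1 : h - 1 + 1 = h := by omega
  have hfin₁ := hS.finite_nM_diff (h - 1)
  have hfin₂ := hS.finite_nM_diff h
  rw [e1] at hfin₁
  have hmaps : ∀ s ∈ (nM S (h - 1) \ nM S h) \ DK S h,
      s + mult S ∈ (nM S h \ nM S (h + 1)) \ CK S h := by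
    rintro s ⟨⟨hs₁, hs₂⟩, hsD⟩
    have hsS := hS.mem_of_mem_nM hs₁
    have hord : ordS S s = h - 1 := by
      have := le_ordS hs₁
      have := mt (hS.mem_nM_iff_le_ordS hsS hh).2 hs₂
      omega
    have hse : s + mult S ∈ nM S h := e1 ▸ add_mem_nM hs₁ (mem_nM_one hS.mult_mem)
    have hord_e : ordS S (s + mult S) ≤ h := not_lt.1 fun hlt => hsD ⟨hsS, hord, hlt⟩
    refine ⟨⟨hse, fun hs => ?_⟩, fun hC => hC.2.2 s hs₁ rfl⟩
    have := le_ordS hs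
    omega
  have hle := ncard_le_ncard_of_injOn _ hmaps (fun _ _ _ _ => Nat.add_right_cancel) hfin₂.sdiff
  have hD := ncard_sdiff_add_ncard_of_subset (DK_subset hh) hfin₁
  have hC := ncard_sdiff_add_ncard_of_subset (CK_subset (S := S) (h := h)) hfin₂
  rw [HF, HF, e1] at hdec
  omega

end

theorem Finsupp.card_support_le_degree {ι : Type*} (a : ι →₀ ℕ) : a.support.card ≤ degree a := by
  rw [degree_apply]
  simpa using Finset.card_nsmul_le_sum a.support a 1 fun i hi => Nat.one_le_iff_ne_zero.2
    (mem_support_iff.1 hi)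

theorem Finsupp.coe_support_add_subset {ι : Type*} {T : Set ι} {a b : ι →₀ ℕ}
    (ha : ↑a.support ⊆ T) (hb : ↑b.support ⊆ T) : ↑(a + b).support ⊆ T := by
  classical
  exact (Finset.coe_subset.2 support_add).trans (by rw [Finset.coe_union]; exact union_subset ha hb)

theorem Finsupp.exists_le_degree_eq_two_le_card {ι : Type*} {a : ι →₀ ℕ}
    (ha : 2 ≤ a.support.card) {k : ℕ} (hk : 2 ≤ k) (hka : k ≤ degree a) :
    ∃ p ≤ a, degree p = k ∧ 2 ≤ p.support.card := by
  classical
  obtain ⟨m₁, hm₁, m₂, hm₂, hne⟩ := Finset.one_lt_card.1 ha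
  have h₁ := mem_support_iff.1 hm₁
  have h₂ := mem_support_iff.1 hm₂
  set p₀ := single m₁ 1 + single m₂ 1
  have hp₀ : p₀ ≤ a := fun i => by
    simp only [p₀, coe_add, Pi.add_apply, single_apply]
    grind
  have hdeg₀ : degree p₀ = 2 := by simp [p₀]
  have hdeg_a : degree a = 2 + degree (a - p₀) := by
    rw [← hdeg₀, ← map_add, add_tsub_cancel_of_le hp₀]
  obtain ⟨g, hg, hdeg⟩ := exists_le_degree_eq (a - p₀) (k - 2) (by omega)
  refine ⟨p₀ + g, (add_le_add le_rfl hg).trans_eq (add_tsub_cancel_of_le hp₀),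
    by rw [map_add, hdeg₀, hdeg]; omega, ?_⟩
  refine Finset.one_lt_card.2 ⟨m₁, ?_, m₂, ?_, hne⟩ <;>
    refine support_mono le_self_add (mem_support_iff.2 ?_) <;>
    simp [p₀, hne, hne.symm]

section

variable {S : Set ℕ} {b c h k n s x y A B : ℕ} {a p : ℕ →₀ ℕ}

theorem minGens_subset : MinGens S ⊆ MS S := sdiff_subset

theorem weight_mem_nM (ha : ↑a.support ⊆ MS S) : weight id a ∈ nM S (degree a) := by
  induction a using Finsupp.induction with
  | zero => exact mem_nM_zero.2 rfl
  | single_add m b f _ hb ih =>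
    have hm : m ∈ MS S := ha (support_mono (le_self_add : single m b ≤ _) (by simp [hb]))
    rw [map_add, map_add, weight_single, degree_single, smul_eq_mul, id]
    exact add_mem_nM (mul_mem_nM hm b)
      (ih ((Finset.coe_subset.2 (support_mono le_add_self)).trans ha))

theorem degree_le_ordS_weight (ha : ↑a.support ⊆ MS S) : degree a ≤ ordS S (weight id a) :=
  le_ordS (weight_mem_nM ha)

theorem exists_rep_of_mem_MS (hx : x ∈ MS S) :
    ∃ a : ℕ →₀ ℕ, ↑a.support ⊆ MinGens S ∧ weight id a = x ∧ 1 ≤ degree a := by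
  induction x using Nat.strong_induction_on with
  | _ x ih =>
    by_cases hgen : x ∈ MinGens S
    · exact ⟨single x 1, by simpa using hgen, by simp [weight_single], by simp⟩
    · obtain ⟨u, hu, v, hv, rfl⟩ : ∃ u ∈ MS S, ∃ v ∈ MS S, x = u + v := by
        by_contra hc
        exact hgen ⟨hx, hc⟩
      have hu0 : u ≠ 0 := hu.2
      have hv0 : v ≠ 0 := hv.2
      obtain ⟨au, hau, rfl, hdu⟩ := ih u (by omega) hu
      obtain ⟨av, hav, rfl, hdv⟩ := ih _ (by omega) hv
      exact ⟨au + av, coe_support_add_subset hau hav, map_add _ _ _, by rw [map_add]; omega⟩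

theorem exists_rep_of_mem_nM (hx : x ∈ nM S k) :
    ∃ a : ℕ →₀ ℕ, ↑a.support ⊆ MinGens S ∧ weight id a = x ∧ k ≤ degree a := by
  induction k generalizing x with
  | zero => exact ⟨0, by simp, (mem_nM_zero.1 hx).symm, le_rfl⟩
  | succ k ih =>
    obtain ⟨u, hu, v, hv, rfl⟩ := hx
    obtain ⟨au, hau, rfl, hdu⟩ := exists_rep_of_mem_MS hu
    obtain ⟨av, hav, rfl, hdv⟩ := ih hv
    exact ⟨au + av, coe_support_add_subset hau hav, map_add _ _ _, by rw [map_add]; omega⟩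

theorem exists_isMaxRep (hs : s ∈ S) : ∃ a, IsMaxRep S s a := by
  obtain ⟨a, ha, rfl, hle⟩ := exists_rep_of_mem_nM (mem_nM_ordS hs)
  exact ⟨a, ha, rfl, le_antisymm (degree_le_ordS_weight (ha.trans minGens_subset)) hle⟩

/-- By superadditivity of `ordS`, since the degrees of `p` and `a - p` add up to `ordS s`. -/
theorem IsMaxRep.of_le (ha : IsMaxRep S s a) (hpa : p ≤ a) : IsMaxRep S (weight id p) p := by
  have hsupp : ∀ q ≤ a, ↑q.support ⊆ MS S := fun q hq =>
    (Finset.coe_subset.2 (support_mono hq)).trans (ha.1.trans minGens_subset)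
  have hp := degree_le_ordS_weight (hsupp p hpa)
  have hr := degree_le_ordS_weight (hsupp (a - p) tsub_le_self)
  have hsum := le_ordS (add_mem_nM (mem_nM_ordS_of_mem_nM (weight_mem_nM (hsupp p hpa)))
    (mem_nM_ordS_of_mem_nM (weight_mem_nM (hsupp (a - p) tsub_le_self))))
  rw [← map_add, add_tsub_cancel_of_le hpa, show weight id a = s from ha.2.1] at hsum
  have hdeg : degree a = degree p + degree (a - p) := by rw [← map_add, add_tsub_cancel_of_le hpa]
  have hdeg_a : degree a = ordS S s := ha.2.2
  refine ⟨(Finset.coe_subset.2 (support_mono hpa)).trans ha.1, rfl, ?_⟩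
  show degree p = ordS S (weight id p)
  omega

theorem bddAbove_suppCard_set : BddAbove {q | ∃ a : ℕ →₀ ℕ, IsMaxRep S s a ∧ a.support.card = q} :=
  ⟨ordS S s, by rintro _ ⟨a, ha, rfl⟩; exact ha.2.2 ▸ card_support_le_degree a⟩

theorem IsMaxRep.card_support_le_suppCard (ha : IsMaxRep S s a) : a.support.card ≤ SuppCard S s :=
  le_csSup bddAbove_suppCard_set ⟨a, ha, rfl⟩

theorem exists_isMaxRep_card_eq_suppCard (hs : s ∈ S) :
    ∃ a, IsMaxRep S s a ∧ a.support.card = SuppCard S s := by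
  obtain ⟨a, ha⟩ := exists_isMaxRep hs
  exact Nat.sSup_mem (s := {q | ∃ a : ℕ →₀ ℕ, IsMaxRep S s a ∧ a.support.card = q})
    ⟨_, a, ha, rfl⟩ bddAbove_suppCard_set

theorem exists_minGens_eq_ordS_mul (hs : s ∈ S) (hpos : 0 < ordS S s) (hsupp : SuppCard S s < 2) :
    ∃ n ∈ MinGens S, s = ordS S s * n := by
  obtain ⟨a, ha⟩ := exists_isMaxRep hs
  obtain ⟨n, hn⟩ := (card_support_le_one (f := a)).1 (by have := ha.card_support_le_suppCard; omega)
  rw [hn] at ha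
  have hdeg : a n = ordS S s := by simpa using ha.2.2
  refine ⟨n, ha.1 (by simp [hdeg, hpos.ne']), ?_⟩
  have hw : weight id (single n (a n)) = s := ha.2.1
  rw [← hdeg, ← hw]
  simp [weight_single]

theorem IsNumSgp.exists_minGens_of_mem_DK (hS : IsNumSgp S) (hx : x ∈ DK S h)
    (hx2 : SuppCard S (x + mult S) < 2) :
    ∃ n ∈ MinGens S, x + mult S = ordS S (x + mult S) * n :=
  exists_minGens_eq_ordS_mul (hS.add_mem hx.1 hS.mult_mem.1) (by have := hx.2.2; omega) hx2

theorem isMaxRep_single (hn : n ∈ MinGens S) (hs : s = ordS S s * n) :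
    IsMaxRep S s (single n (ordS S s)) :=
  ⟨(Finset.coe_subset.2 support_single_subset).trans (by simpa using hn),
    by simpa [weight_single] using hs.symm, by simp⟩

theorem le_suppCard_of_add_single (hp : ↑p.support ⊆ MinGens S) (hn : n ∈ MinGens S)
    (hw : weight id p + c * n = s) (hd : degree p + c = ordS S s) :
    p.support.card ≤ SuppCard S s := by
  have hq : IsMaxRep S s (p + single n c) :=
    ⟨coe_support_add_subset hp
        ((Finset.coe_subset.2 support_single_subset).trans (by simpa using hn)),
      by show weight id (p + single n c) = s; simpa [weight_single] using hw,
      by show degree (p + single n c) = ordS S s; simpa using hd⟩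
  exact (Finset.card_le_card (support_mono le_self_add)).trans hq.card_support_le_suppCard

/-- Removing `e` from the sub-sum would put `x = t + (rest)` in `hM`, as the rest has degree
`ordS (x + e) - h ≥ 1`. -/
theorem IsNumSgp.weight_mem_CK (hS : IsNumSgp S) (hx : x ∈ DK S h)
    (ha : IsMaxRep S (x + mult S) a) (hpa : p ≤ a) (hp : degree p = h) : weight id p ∈ CK S h := by
  have hmax := ha.of_le hpa
  have hord : ordS S (weight id p) = h := hp ▸ hmax.2.2.symm
  refine ⟨hS.mem_of_mem_nM (weight_mem_nM (hmax.1.trans minGens_subset)), hord, fun t ht hte => ?_⟩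
  have hr : ↑(a - p).support ⊆ MS S :=
    (Finset.coe_subset.2 (support_mono tsub_le_self)).trans (ha.1.trans minGens_subset)
  have hdeg : degree a = h + degree (a - p) := by rw [← hp, ← map_add, add_tsub_cancel_of_le hpa]
  have hdeg_a : degree a = ordS S (x + mult S) := ha.2.2
  have hsum : x + mult S = weight id p + weight id (a - p) := by
    rw [← map_add, add_tsub_cancel_of_le hpa]; exact ha.2.1.symm
  have hxt : x = t + weight id (a - p) := by omega
  have := le_ordS (hxt ▸ add_mem_nM ht (weight_mem_nM hr))
  have := hx.2.1
  have := hx.2.2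
  omega

/-- The injection of `{x ∈ D_h | |Supp(x + e)| < 2}` into `C_h` is `x ↦ genPow S h (x + e)`: such an
`x` has `x + e = ordS (x + e) * n` for a minimal generator `n`, and is sent to `h * n`. -/
noncomputable def genPow (S : Set ℕ) (h s : ℕ) : ℕ := h * (s / ordS S s)

theorem genPow_eq (hpos : 0 < ordS S s) (hs : s = ordS S s * n) : genPow S h s = h * n := by
  rw [genPow, Nat.div_eq_of_eq_mul_right hpos hs]

theorem IsNumSgp.genPow_mem_CK (hS : IsNumSgp S) (hx : x ∈ DK S h) (hn : n ∈ MinGens S)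
    (hxn : x + mult S = ordS S (x + mult S) * n) : genPow S h (x + mult S) ∈ CK S h := by
  have hA := hx.2.2
  rw [genPow_eq (by omega) hxn]
  simpa [weight_single] using hS.weight_mem_CK hx (isMaxRep_single hn hxn)
    (single_le_iff.2 (by simpa using hA.le)) (degree_single n h)

/-- Otherwise the larger of `x`, `y` is the smaller one plus a positive multiple of `n`, hence of
larger order. -/
theorem eq_of_ordS_eq_of_add_eq_mul (hx : x ∈ S) (hy : y ∈ S) (hxy : ordS S x = ordS S y)
    (hn : n ∈ MS S) (hxA : x + c = A * n) (hyB : y + c = B * n) : x = y := by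
  wlog hAB : A ≤ B generalizing x y A B
  · exact (this hy hx hxy.symm hyB hxA (le_of_not_ge hAB)).symm
  have hBn : B * n = A * n + (B - A) * n := by rw [← add_mul, Nat.add_sub_cancel' hAB]
  have hord := le_ordS (add_mem_nM (mem_nM_ordS hx) (mul_mem_nM hn (B - A)))
  rw [show x + (B - A) * n = y by omega] at hord
  rw [show B - A = 0 by omega, zero_mul] at hBn
  omega

theorem IsNumSgp.genPow_injOn (hS : IsNumSgp S) (hh : 1 ≤ h) :
    InjOn (fun x => genPow S h (x + mult S)) {x ∈ DK S h | SuppCard S (x + mult S) < 2} := by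
  rintro x ⟨hx, hx2⟩ y ⟨hy, hy2⟩ hxy
  obtain ⟨n, hn, hxn⟩ := hS.exists_minGens_of_mem_DK hx hx2
  obtain ⟨m, -, hym⟩ := hS.exists_minGens_of_mem_DK hy hy2
  have := hx.2.2
  have := hy.2.2
  simp only [genPow_eq (by omega) hxn, genPow_eq (by omega) hym] at hxy
  obtain rfl := Nat.eq_of_mul_eq_mul_left hh hxy
  exact eq_of_ordS_eq_of_add_eq_mul hx.1 hy.1 (hx.2.1.trans hy.2.1.symm) (minGens_subset hn)
    hxn hym

/-- `c` is a degree-`h` sub-sum, involving two generators, of a maximal representation of `b + e`.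
If `c = h * n` with `x + e = ordS (x + e) * n`, then `c + (ordS (x + e) - h) * n` is a maximal
representation of `x + e` with two generators. -/
theorem IsNumSgp.exists_mem_CK_ne_genPow (hS : IsNumSgp S) (hh : 2 ≤ h) (hb : b ∈ DK S h)
    (hb2 : 2 ≤ SuppCard S (b + mult S)) :
    ∃ c ∈ CK S h, ∀ x ∈ DK S h, SuppCard S (x + mult S) < 2 → genPow S h (x + mult S) ≠ c := by
  obtain ⟨a, ha, hcard⟩ := exists_isMaxRep_card_eq_suppCard (hS.add_mem hb.1 hS.mult_mem.1)
  have hdeg_a : degree a = ordS S (b + mult S) := ha.2.2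
  obtain ⟨p, hpa, hdeg, hp2⟩ :=
    exists_le_degree_eq_two_le_card (hcard ▸ hb2) hh (hdeg_a ▸ hb.2.2.le)
  refine ⟨weight id p, hS.weight_mem_CK hb ha hpa hdeg, fun x hx hx2 hxp => ?_⟩
  obtain ⟨n, hn, hxn⟩ := hS.exists_minGens_of_mem_DK hx hx2
  have hA := hx.2.2
  rw [genPow_eq (by omega) hxn] at hxp
  have hw : weight id p + (ordS S (x + mult S) - h) * n = x + mult S := by
    rw [← hxp, ← add_mul, Nat.add_sub_cancel' hA.le, ← hxn]
  have := le_suppCard_of_add_single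
    ((Finset.coe_subset.2 (support_mono hpa)).trans ha.1) hn hw (by omega)
  omega

theorem IsNumSgp.ncard_DK_le_ncard_CK (hS : IsNumSgp S) (hh : 2 ≤ h)
    (hB : ∀ x ∈ DK S h, ∀ y ∈ DK S h,
      2 ≤ SuppCard S (x + mult S) → 2 ≤ SuppCard S (y + mult S) → x = y) :
    (DK S h).ncard ≤ (CK S h).ncard := by
  classical
  set ψ := fun x => genPow S h (x + mult S)
  have hfin : (CK S h).Finite := (hS.finite_nM_diff h).subset CK_subset
  have hmaps : ∀ x ∈ DK S h, SuppCard S (x + mult S) < 2 → ψ x ∈ CK S h := fun x hx hx2 =>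
    let ⟨_, hn, hxn⟩ := hS.exists_minGens_of_mem_DK hx hx2
    hS.genPow_mem_CK hx hn hxn
  have hinj := hS.genPow_injOn (h := h) (by omega)
  by_cases hb : ∃ b ∈ DK S h, 2 ≤ SuppCard S (b + mult S)
  · obtain ⟨b, hbD, hb2⟩ := hb
    obtain ⟨c, hc, hcψ⟩ := hS.exists_mem_CK_ne_genPow hh hbD hb2
    have hsmall : ∀ x ∈ DK S h, x ≠ b → SuppCard S (x + mult S) < 2 := fun x hx hxb =>
      not_le.1 fun hx2 => hxb (hB x hx b hbD hx2 hb2)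
    refine ncard_le_ncard_of_injOn (Function.update ψ b c) (fun x hx => ?_)
      (fun x hx y hy hxy => ?_) hfin
    · by_cases hxb : x = b
      · simpa [hxb] using hc
      · simpa [hxb] using hmaps x hx (hsmall x hx hxb)
    · by_cases hxb : x = b <;> by_cases hyb : y = b
      · rw [hxb, hyb]
      · simp only [hxb, Function.update_self, Function.update_of_ne hyb] at hxy
        exact absurd hxy.symm (hcψ y hy (hsmall y hy hyb))
      · simp only [hyb, Function.update_self, Function.update_of_ne hxb] at hxy
        exact absurd hxy (hcψ x hx (hsmall x hx hxb))
      · simp only [Function.update_of_ne hxb, Function.update_of_ne hyb] at hxy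
        exact hinj ⟨hx, hsmall x hx hxb⟩ ⟨hy, hsmall y hy hyb⟩ hxy
  · simp only [not_exists, not_and, not_le] at hb
    exact ncard_le_ncard_of_injOn ψ (fun x hx => hmaps x hx (hb x hx))
      (fun x hx y hy => hinj ⟨hx, hb x hx⟩ ⟨hy, hb y hy⟩) hfin

end

theorem stmt10_general (S : Set ℕ) (hS : IsNumSgp S) (h : ℕ)
    (hdec : HF S h < HF S (h - 1)) :
    ∃ x₁ ∈ DK S h, ∃ x₂ ∈ DK S h, x₁ ≠ x₂ ∧
      2 ≤ SuppCard S (x₁ + mult S) ∧ 2 ≤ SuppCard S (x₂ + mult S) := by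
  have hh := hS.two_le_of_HF_lt hdec
  by_contra hcon
  refine (hS.ncard_CK_lt_ncard_DK (by omega) hdec).not_ge (hS.ncard_DK_le_ncard_CK hh ?_)
  intro x hx y hy hx2 hy2
  by_contra hxy
  exact hcon ⟨x, hx, y, hy, hxy, hx2, hy2⟩

theorem stmt10 (S : Set ℕ) (hS : IsNumSgp S) (h : ℕ) (hh : 1 ≤ h)
    (hdec : HF S h < HF S (h - 1)) :
    ∃ x₁ ∈ DK S h, ∃ x₂ ∈ DK S h, x₁ ≠ x₂ ∧
      2 ≤ SuppCard S (x₁ + mult S) ∧ 2 ≤ SuppCard S (x₂ + mult S) :=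
  stmt10_general S hS h hdec
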